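/- arXiv:2312.02114 — 8 statements merged into one kernel-verified Lean document; each statement's English description precedes it below -/
import Mathlib

section
/- Suppose for every player i: (variation) for all s,t ∈ D, sw(s) ≥ sw(t) implies uᵢ(s) ≥ uᵢ(t)/β; and (lower coordination dependence) min over T(D) of uᵢ ≥ (min over D of uᵢ)/α, with α, β ≥ 1 and all utilities nonnegative. Then PoTA ≥ PoA/(αβ). Dually, if each uᵢ is β-varied and α-upper dependent on coordination (max over T(D) of uᵢ ≤ α·max over D of uᵢ), then PoTS ≤ αβ·PoS. -/
/-- The transition set of a solution set `D`. -/
def transitionSet {ι : Type*} {S : ι → Type*} (D : Set (∀ i, S i)) : Set (∀ i, S i) :=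
  {s | ∀ i, ∃ d ∈ D, s i = d i}

/-!
Pick a profile `s₀ ∈ D` of minimal (resp. maximal) social welfare. By `β`-variation every player
gets at least `uᵢ(s₀)/β` (resp. at most `β uᵢ(s₀)`) anywhere in `D`, and coordination dependence
moves this bound to the transition set at the cost of a factor `α`. Summing over the players
compares the welfare on `T(D)` with `sw(s₀)`, and dividing by the optimal welfare gives the claim.
-/

theorem subset_transitionSet {ι : Type*} {S : ι → Type*} (D : Set (∀ i, S i)) :
    D ⊆ transitionSet D :=
  fun d hd _ => ⟨d, hd, rfl⟩

section Variation

variable {X : Type*} {D : Set X} {w f : X → ℝ} {β : ℝ} {s₀ : X}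

theorem div_le_csInf_image_of_forall_le (hD : D.Nonempty) (hs₀ : s₀ ∈ D)
    (hmin : ∀ s ∈ D, w s₀ ≤ w s) (hvar : ∀ s ∈ D, ∀ t ∈ D, w s ≥ w t → f s ≥ f t / β) :
    f s₀ / β ≤ sInf (f '' D) :=
  le_csInf (hD.image f) <| by
    rintro _ ⟨s, hs, rfl⟩
    exact hvar s hs s₀ hs₀ (hmin s hs)

theorem csSup_image_le_mul_of_forall_le (hβ : 0 < β) (hD : D.Nonempty) (hs₀ : s₀ ∈ D)
    (hmax : ∀ s ∈ D, w s ≤ w s₀) (hvar : ∀ s ∈ D, ∀ t ∈ D, w s ≥ w t → f s ≥ f t / β) :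
    sSup (f '' D) ≤ β * f s₀ :=
  csSup_le (hD.image f) <| by
    rintro _ ⟨s, hs, rfl⟩
    have h := hvar s₀ hs₀ s hs (hmax s hs)
    rwa [ge_iff_le, div_le_iff₀ hβ, mul_comm] at h

end Variation

section Welfare

variable {ι X : Type*} [Fintype ι] {u : ι → X → ℝ} {sw : X → ℝ} {D T : Set X} {α β : ℝ}

theorem csInf_image_div_le_csInf_image (hα : 0 < α)
    (hsw : ∀ s, sw s = ∑ i, u i s) (hD : D.Finite) (hDne : D.Nonempty) (hT : T.Finite)
    (hTne : T.Nonempty) (hvar : ∀ i, ∀ s ∈ D, ∀ t ∈ D, sw s ≥ sw t → u i s ≥ u i t / β)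
    (hlo : ∀ i, sInf (u i '' T) ≥ sInf (u i '' D) / α) :
    sInf (sw '' D) / (α * β) ≤ sInf (sw '' T) := by
  obtain ⟨s₀, hs₀, hmin⟩ := Set.exists_min_image D sw hD hDne
  have hs₀_inf : sInf (sw '' D) = sw s₀ :=
    le_antisymm (csInf_le (hD.image sw).bddBelow ⟨s₀, hs₀, rfl⟩)
      (le_csInf (hDne.image sw) (by rintro _ ⟨s, hs, rfl⟩; exact hmin s hs))
  refine le_csInf (hTne.image sw) ?_
  rintro _ ⟨t, ht, rfl⟩
  have hplayer : ∀ i, u i s₀ / (α * β) ≤ u i t := fun i =>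
    calc u i s₀ / (α * β) = u i s₀ / β / α := by ring
      _ ≤ sInf (u i '' D) / α := by
        gcongr; exact div_le_csInf_image_of_forall_le hDne hs₀ hmin (hvar i)
      _ ≤ sInf (u i '' T) := hlo i
      _ ≤ u i t := csInf_le (hT.image (u i)).bddBelow ⟨t, ht, rfl⟩
  calc sInf (sw '' D) / (α * β) = ∑ i, u i s₀ / (α * β) := by
        rw [hs₀_inf, hsw, Finset.sum_div]
    _ ≤ ∑ i, u i t := Finset.sum_le_sum fun i _ => hplayer i
    _ = sw t := (hsw t).symm

theorem csSup_image_le_mul_csSup_image (hα : 0 < α) (hβ : 0 < β)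
    (hsw : ∀ s, sw s = ∑ i, u i s) (hD : D.Finite) (hDne : D.Nonempty) (hT : T.Finite)
    (hTne : T.Nonempty) (hvar : ∀ i, ∀ s ∈ D, ∀ t ∈ D, sw s ≥ sw t → u i s ≥ u i t / β)
    (hhi : ∀ i, sSup (u i '' T) ≤ α * sSup (u i '' D)) :
    sSup (sw '' T) ≤ α * β * sSup (sw '' D) := by
  obtain ⟨s₀, hs₀, hmax⟩ := Set.exists_max_image D sw hD hDne
  have hs₀_sup : sSup (sw '' D) = sw s₀ :=
    le_antisymm (csSup_le (hDne.image sw) (by rintro _ ⟨s, hs, rfl⟩; exact hmax s hs))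
      (le_csSup (hD.image sw).bddAbove ⟨s₀, hs₀, rfl⟩)
  refine csSup_le (hTne.image sw) ?_
  rintro _ ⟨t, ht, rfl⟩
  have hplayer : ∀ i, u i t ≤ α * β * u i s₀ := fun i =>
    calc u i t ≤ sSup (u i '' T) := le_csSup (hT.image (u i)).bddAbove ⟨t, ht, rfl⟩
      _ ≤ α * sSup (u i '' D) := hhi i
      _ ≤ α * (β * u i s₀) := by
        gcongr; exact csSup_image_le_mul_of_forall_le hβ hDne hs₀ hmax (hvar i)
      _ = α * β * u i s₀ := by ring
  calc sw t = ∑ i, u i t := hsw t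
    _ ≤ ∑ i, α * β * u i s₀ := Finset.sum_le_sum fun i _ => hplayer i
    _ = α * β * sSup (sw '' D) := by rw [← Finset.mul_sum, hs₀_sup, hsw]

end Welfare

theorem stmt7_general {ι : Type*} [Fintype ι] {S : ι → Type*} [∀ i, Fintype (S i)]
    (u : ι → (∀ i, S i) → ℝ)
    (D : Set (∀ i, S i)) (hD : D.Nonempty)
    (sw : (∀ i, S i) → ℝ) (hsw : ∀ s, sw s = ∑ i, u i s)
    (hpos : 0 < sSup (sw '' Set.univ)) (α β : ℝ) (hα : 1 ≤ α) (hβ : 1 ≤ β)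
    (hvar : ∀ i, ∀ s ∈ D, ∀ t ∈ D, sw s ≥ sw t → u i s ≥ u i t / β) :
    ((∀ i, sInf (u i '' transitionSet D) ≥ sInf (u i '' D) / α) →
      sInf (sw '' transitionSet D) / sSup (sw '' Set.univ) ≥
        (sInf (sw '' D) / sSup (sw '' Set.univ)) / (α * β)) ∧
    ((∀ i, sSup (u i '' transitionSet D) ≤ α * sSup (u i '' D)) →
      sSup (sw '' transitionSet D) / sSup (sw '' Set.univ) ≤
        α * β * (sSup (sw '' D) / sSup (sw '' Set.univ))) := by
  have hα₀ : 0 < α := one_pos.trans_le hα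
  have hβ₀ : 0 < β := one_pos.trans_le hβ
  have hTne : (transitionSet D).Nonempty := hD.mono (subset_transitionSet D)
  constructor
  · intro hlo
    rw [ge_iff_le, div_right_comm]
    exact div_le_div_of_nonneg_right (csInf_image_div_le_csInf_image hα₀ hsw D.toFinite hD
      (transitionSet D).toFinite hTne hvar hlo) hpos.le
  · intro hhi
    rw [mul_div_assoc']
    exact div_le_div_of_nonneg_right (csSup_image_le_mul_csSup_image hα₀ hβ₀ hsw D.toFinite hD
      (transitionSet D).toFinite hTne hvar hhi) hpos.le

/-- If every player's utility is `β`-varied over `D` and `α`-lower dependent on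
coordination, then `PoTA ≥ PoA/(αβ)`; dually, if every player's utility is `β`-varied
and `α`-upper dependent on coordination, then `PoTS ≤ αβ·PoS`. -/
theorem stmt7 {ι : Type*} [Fintype ι] {S : ι → Type*} [∀ i, Fintype (S i)]
    [∀ i, Nonempty (S i)]
    (u : ι → (∀ i, S i) → ℝ) (hnn : ∀ i s, 0 ≤ u i s)
    (D : Set (∀ i, S i)) (hD : D.Nonempty)
    (sw : (∀ i, S i) → ℝ) (hsw : ∀ s, sw s = ∑ i, u i s)
    (hpos : 0 < sSup (sw '' Set.univ)) (α β : ℝ) (hα : 1 ≤ α) (hβ : 1 ≤ β)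
    (hvar : ∀ i, ∀ s ∈ D, ∀ t ∈ D, sw s ≥ sw t → u i s ≥ u i t / β) :
    ((∀ i, sInf (u i '' transitionSet D) ≥ sInf (u i '' D) / α) →
      sInf (sw '' transitionSet D) / sSup (sw '' Set.univ) ≥
        (sInf (sw '' D) / sSup (sw '' Set.univ)) / (α * β)) ∧
    ((∀ i, sSup (u i '' transitionSet D) ≤ α * sSup (u i '' D)) →
      sSup (sw '' transitionSet D) / sSup (sw '' Set.univ) ≤
        α * β * (sSup (sw '' D) / sSup (sw '' Set.univ))) :=
  stmt7_general u D hD sw hsw hpos α β hα hβ hvar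
end

section
/- In the atomic routing game with n players and n parallel identical edges with cost c(x) = x, where each player picks one edge and pays the number of players on her edge: a profile is a Nash equilibrium iff all chosen edges are distinct; every equilibrium has social cost n (so PoA = 1); and merging m equilibria can yield an m-transition of social cost m² + (n − m), so the price of m-transition anarchy is at least (m² + n − m)/n, which equals n when m = n. -/
/-- In the atomic routing game on `n` parallel identical edges, player `i`'s cost in
profile `s` is the number of players sharing her edge. -/
def edgeCost {n : ℕ} (s : Fin n → Fin n) (i : Fin n) : ℕ :=
  (Finset.univ.filter fun j => s j = s i).card

/-- Social cost: sum of the players' costs. -/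
def totalCost {n : ℕ} (s : Fin n → Fin n) : ℕ :=
  ∑ i, edgeCost s i

/-- The `m`-transitions of the Nash-equilibrium set of this game. -/
def mTransNE {n : ℕ} (m : ℕ) : Set (Fin n → Fin n) :=
  {t | ∃ F : Finset (Fin n → Fin n), F.card ≤ m ∧
    (∀ d ∈ F, ∀ i (x : Fin n), edgeCost d i ≤ edgeCost (Function.update d i x) i) ∧
    ∀ i, ∃ d ∈ F, t i = d i}

/-! A shared edge leaves another edge empty (pigeonhole), and moving there costs 1, so the
equilibria are exactly the permutations, each of social cost `n`. Merging the `m` equilibria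
`swap 0 k`, `k < m`, sends players `0, …, m - 1` onto edge `0` and leaves every other player
alone: that costs `m · m + (n - m)`. Since every player pays at least 1, the optimum is `n`,
attained by any equilibrium. -/

open Finset Function

section Costs

variable {n : ℕ}

def IsNash (s : Fin n → Fin n) : Prop :=
  ∀ i x, edgeCost s i ≤ edgeCost (update s i x) i

lemma one_le_edgeCost (s : Fin n → Fin n) (i : Fin n) : 1 ≤ edgeCost s i :=
  card_pos.mpr ⟨i, by simp⟩

lemma edgeCost_le (s : Fin n → Fin n) (i : Fin n) : edgeCost s i ≤ n := by
  simpa [edgeCost] using card_filter_le univ fun j => s j = s i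

lemma edgeCost_eq_one_iff {s : Fin n → Fin n} {i : Fin n} :
    edgeCost s i = 1 ↔ ∀ j, s j = s i → j = i := by
  rw [edgeCost, card_eq_one]
  constructor
  · rintro ⟨a, ha⟩ j hj
    have hi : i ∈ ({a} : Finset (Fin n)) := ha ▸ by simp
    have hj : j ∈ ({a} : Finset (Fin n)) := ha ▸ by simpa using hj
    rw [mem_singleton] at hi hj
    rw [hi, hj]
  · intro h
    exact ⟨i, by ext j; simpa using ⟨h j, fun hj => hj ▸ rfl⟩⟩

lemma edgeCost_eq_one_of_injective {s : Fin n → Fin n} (hs : Injective s) (i : Fin n) :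
    edgeCost s i = 1 :=
  edgeCost_eq_one_iff.mpr fun _ h => hs h

lemma edgeCost_update_of_notMem_range {s : Fin n → Fin n} {e : Fin n} (he : e ∉ Set.range s)
    (i : Fin n) : edgeCost (update s i e) i = 1 := by
  refine edgeCost_eq_one_iff.mpr fun j hj => ?_
  by_contra hji
  rw [update_self, update_of_ne hji] at hj
  exact he ⟨j, hj⟩

lemma two_le_edgeCost {s : Fin n → Fin n} {i j : Fin n} (hij : s i = s j) (hne : i ≠ j) :
    2 ≤ edgeCost s i := by
  by_contra! h
  exact hne (edgeCost_eq_one_iff.mp (by linarith [one_le_edgeCost s i]) j hij.symm).symm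

theorem isNash_iff_injective (s : Fin n → Fin n) : IsNash s ↔ Injective s := by
  refine ⟨fun h => ?_, fun hs i x => ?_⟩
  · by_contra hinj
    obtain ⟨e, he⟩ : ∃ e, e ∉ Set.range s := by
      simpa [Surjective] using mt Finite.injective_iff_surjective.mpr hinj
    obtain ⟨i, j, hij, hne⟩ := not_injective_iff.mp hinj
    have := h i e
    rw [edgeCost_update_of_notMem_range he] at this
    linarith [two_le_edgeCost hij hne]
  · rw [edgeCost_eq_one_of_injective hs]
    exact one_le_edgeCost _ _

lemma totalCost_eq_of_injective {s : Fin n → Fin n} (hs : Injective s) : totalCost s = n := by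
  simp [totalCost, edgeCost_eq_one_of_injective hs]

lemma le_totalCost (s : Fin n → Fin n) : n ≤ totalCost s := by
  simpa [totalCost] using sum_le_sum fun i (_ : i ∈ univ) => one_le_edgeCost s i

lemma totalCost_le_sq (s : Fin n → Fin n) : totalCost s ≤ n ^ 2 := by
  simpa [totalCost, sq] using sum_le_sum fun i (_ : i ∈ univ) => edgeCost_le s i

lemma isLeast_totalCost : IsLeast (Set.range fun s : Fin n → Fin n => (totalCost s : ℝ)) n :=
  ⟨⟨id, by simp [totalCost_eq_of_injective injective_id]⟩,
    Set.forall_mem_range.mpr fun s => by exact_mod_cast le_totalCost s⟩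

lemma bddAbove_totalCost (S : Set (Fin n → Fin n)) :
    BddAbove ((fun t => (totalCost t : ℝ)) '' S) :=
  ⟨n ^ 2, Set.forall_mem_image.mpr fun t _ => by exact_mod_cast totalCost_le_sq t⟩

end Costs

section Merging

variable {n : ℕ} (hn : 0 < n) (m : ℕ)

def mergedProfile : Fin n → Fin n := fun i => if (i : ℕ) < m then ⟨0, hn⟩ else i

lemma mergedProfile_mem_mTransNE (hm : 1 ≤ m) : mergedProfile hn m ∈ mTransNE (n := n) m := by
  classical
  refine ⟨(univ.filter fun k : Fin n => (k : ℕ) < m).image fun k => ⇑(Equiv.swap ⟨0, hn⟩ k),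
    ?_, ?_, fun i => ?_⟩
  · exact card_image_le.trans (by simp [Fin.card_filter_val_lt])
  · simp only [mem_image, mem_filter, mem_univ, true_and]
    rintro _ ⟨k, -, rfl⟩
    exact (isNash_iff_injective _).mpr (Equiv.injective _)
  · simp only [mem_image, mem_filter, mem_univ, true_and, exists_exists_and_eq_and]
    by_cases hi : (i : ℕ) < m
    · exact ⟨i, hi, by simp [mergedProfile, hi]⟩
    · exact ⟨⟨0, hn⟩, hm, by simp [mergedProfile, hi]⟩

lemma mergedProfile_eq_zero_iff (hm : 1 ≤ m) {j : Fin n} :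
    mergedProfile hn m j = ⟨0, hn⟩ ↔ (j : ℕ) < m := by
  unfold mergedProfile
  split_ifs with hj
  · simp [hj]
  · simp only [hj, iff_false, Fin.ext_iff]
    omega

lemma edgeCost_mergedProfile (hm : 1 ≤ m) (hmn : m ≤ n) (i : Fin n) :
    edgeCost (mergedProfile hn m) i = if (i : ℕ) < m then m else 1 := by
  split_ifs with hi
  · have hti : mergedProfile hn m i = ⟨0, hn⟩ := (mergedProfile_eq_zero_iff hn m hm).mpr hi
    simp only [edgeCost, hti, mergedProfile_eq_zero_iff hn m hm, Fin.card_filter_val_lt]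
    omega
  · refine edgeCost_eq_one_iff.mpr fun j hj => ?_
    have hti : mergedProfile hn m i = i := if_neg hi
    by_cases hjm : (j : ℕ) < m
    · rw [hti, (mergedProfile_eq_zero_iff hn m hm).mpr hjm, Fin.ext_iff, Fin.val_mk] at hj
      omega
    · rwa [hti, mergedProfile, if_neg hjm] at hj

lemma totalCost_mergedProfile (hm : 1 ≤ m) (hmn : m ≤ n) :
    totalCost (mergedProfile hn m) = m ^ 2 + (n - m) := by
  rw [totalCost, Finset.sum_congr rfl fun i _ => edgeCost_mergedProfile hn m hm hmn i,
    Fin.sum_univ_eq_sum_range (fun i => if i < m then m else 1),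
    ← sum_range_add_sum_Ico _ hmn,
    sum_congr rfl fun i hi => if_pos (mem_range.mp hi),
    sum_congr rfl fun i hi => if_neg (mem_Ico.mp hi).1.not_gt]
  simp [sq]

end Merging

theorem stmt12_general {n : ℕ} (m : ℕ) (hm1 : 1 ≤ m) (hmn : m ≤ n) :
    (∀ s : Fin n → Fin n,
      ((∀ i (x : Fin n), edgeCost s i ≤ edgeCost (Function.update s i x) i) ↔
        Function.Injective s)) ∧
    (∀ s : Fin n → Fin n, Function.Injective s → totalCost s = n) ∧
    (∃ t ∈ mTransNE (n := n) m, totalCost t = m ^ 2 + (n - m)) ∧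
    ((m ^ 2 + (n - m) : ℝ) / n ≤
      sSup ((fun t : Fin n → Fin n => (totalCost t : ℝ)) '' mTransNE (n := n) m) /
        sInf ((fun s : Fin n → Fin n => (totalCost s : ℝ)) '' Set.univ)) ∧
    (m = n → (m ^ 2 + (n - m) : ℝ) / n = n) := by
  have hn : 0 < n := by omega
  have hmem := mergedProfile_mem_mTransNE hn m hm1
  have hcost := totalCost_mergedProfile hn m hm1 hmn
  refine ⟨isNash_iff_injective, fun _ => totalCost_eq_of_injective, ⟨_, hmem, hcost⟩, ?_, ?_⟩
  · have hcost_real : ((m ^ 2 + (n - m) : ℕ) : ℝ) = m ^ 2 + (n - m : ℝ) := by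
      push_cast [hmn]
      ring
    rw [Set.image_univ, isLeast_totalCost.csInf_eq, ← hcost_real]
    gcongr
    exact le_csSup (bddAbove_totalCost _) ⟨_, hmem, congrArg Nat.cast hcost⟩
  · rintro rfl
    field_simp
    ring

/-- In the atomic routing game with `n` players on `n` parallel edges with cost `c(x)=x`:
a profile is a Nash equilibrium iff it is injective; every equilibrium has social cost
`n` (so `PoA = 1`); some `m`-transition has social cost `m² + (n − m)`; hence the price
of `m`-transition anarchy is at least `(m² + n − m)/n`, which equals `n` when `m = n`. -/
theorem stmt12 {n : ℕ} (hn : 0 < n) (m : ℕ) (hm1 : 1 ≤ m) (hmn : m ≤ n) :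
    (∀ s : Fin n → Fin n,
      ((∀ i (x : Fin n), edgeCost s i ≤ edgeCost (Function.update s i x) i) ↔
        Function.Injective s)) ∧
    (∀ s : Fin n → Fin n, Function.Injective s → totalCost s = n) ∧
    (∃ t ∈ mTransNE (n := n) m, totalCost t = m ^ 2 + (n - m)) ∧
    ((m ^ 2 + (n - m) : ℝ) / n ≤
      sSup ((fun t : Fin n → Fin n => (totalCost t : ℝ)) '' mTransNE (n := n) m) /
        sInf ((fun s : Fin n → Fin n => (totalCost s : ℝ)) '' Set.univ)) ∧
    (m = n → (m ^ 2 + (n - m) : ℝ) / n = n) :=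
  stmt12_general m hm1 hmn
end

section
/- In a two-player game, if for all x, x' ∈ S₁ and y, y' ∈ S₂: (u₁(x,y) ≤ u₁(x',y) and u₂(x,y) ≤ u₂(x,y')) implies (sw(x,y) ≤ sw(x',y) or sw(x,y) ≤ sw(x,y')), then the maximum social welfare over transitions of Nash equilibria equals the maximum over Nash equilibria (PoTS = PoS). -/
/-! Every Nash equilibrium is a transition, and each transition `(x, y)`, witnessed by equilibria
`(x', y)` and `(x, y')`, has `u₁ x y ≤ u₁ x' y` and `u₂ x y ≤ u₂ x y'`; the hypothesis then bounds
its welfare by that of one of these two equilibria. So the two sets of welfare values bound each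
other elementwise and have the same supremum. -/

/-- Nash equilibria of a two-player game. -/
def nashSet2 {S₁ S₂ : Type*} (u₁ u₂ : S₁ → S₂ → ℝ) : Set (S₁ × S₂) :=
  {p | (∀ x' : S₁, u₁ x' p.2 ≤ u₁ p.1 p.2) ∧ (∀ y' : S₂, u₂ p.1 y' ≤ u₂ p.1 p.2)}

/-- Transitions of the Nash equilibria of a two-player game. -/
def transNE2 {S₁ S₂ : Type*} (u₁ u₂ : S₁ → S₂ → ℝ) : Set (S₁ × S₂) :=
  {p | (∃ y' : S₂, (p.1, y') ∈ nashSet2 u₁ u₂) ∧ (∃ x' : S₁, (x', p.2) ∈ nashSet2 u₁ u₂)}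

theorem csSup_image_eq_of_subset_of_forall_exists_le {α β : Type*}
    [ConditionallyCompleteLinearOrder β] {f : α → β} {s t : Set α} (hst : s ⊆ t)
    (hdom : ∀ p ∈ t, ∃ q ∈ s, f p ≤ f q) :
    sSup (f '' t) = sSup (f '' s) := by
  refine csSup_eq_csSup_of_forall_exists_le ?_ ?_
  · rintro _ ⟨p, hp, rfl⟩
    obtain ⟨q, hq, hpq⟩ := hdom p hp
    exact ⟨f q, ⟨q, hq, rfl⟩, hpq⟩
  · rintro _ ⟨q, hq, rfl⟩
    exact ⟨f q, ⟨q, hst hq, rfl⟩, le_rfl⟩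

section TwoPlayerGame

variable {S₁ S₂ : Type*} {u₁ u₂ : S₁ → S₂ → ℝ}

theorem nashSet2_subset_transNE2 : nashSet2 u₁ u₂ ⊆ transNE2 u₁ u₂ :=
  fun p hp => ⟨⟨p.2, hp⟩, ⟨p.1, hp⟩⟩

theorem exists_mem_nashSet2_le_of_mem_transNE2 {sw : S₁ × S₂ → ℝ}
    (h : ∀ (x x' : S₁) (y y' : S₂), u₁ x y ≤ u₁ x' y → u₂ x y ≤ u₂ x y' →
      (sw (x, y) ≤ sw (x', y) ∨ sw (x, y) ≤ sw (x, y')))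
    {p : S₁ × S₂} (hp : p ∈ transNE2 u₁ u₂) :
    ∃ q ∈ nashSet2 u₁ u₂, sw p ≤ sw q := by
  obtain ⟨⟨y', hy'⟩, ⟨x', hx'⟩⟩ := hp
  rcases h p.1 x' p.2 y' (hx'.1 p.1) (hy'.2 p.2) with hle | hle
  · exact ⟨(x', p.2), hx', hle⟩
  · exact ⟨(p.1, y'), hy', hle⟩

end TwoPlayerGame

theorem stmt14_general {S₁ S₂ : Type*}
    (u₁ u₂ : S₁ → S₂ → ℝ) (sw : S₁ × S₂ → ℝ)
    (h : ∀ (x x' : S₁) (y y' : S₂),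
      u₁ x y ≤ u₁ x' y → u₂ x y ≤ u₂ x y' →
        (sw (x, y) ≤ sw (x', y) ∨ sw (x, y) ≤ sw (x, y'))) :
    sSup (sw '' transNE2 u₁ u₂) = sSup (sw '' nashSet2 u₁ u₂) :=
  csSup_image_eq_of_subset_of_forall_exists_le nashSet2_subset_transNE2
    fun _ hp => exists_mem_nashSet2_le_of_mem_transNE2 h hp

/-- In a two-player game, if whenever `u₁(x,y) ≤ u₁(x',y)` and `u₂(x,y) ≤ u₂(x,y')`
one of `sw(x,y) ≤ sw(x',y)` or `sw(x,y) ≤ sw(x,y')` holds, then the best social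
welfare over transitions of Nash equilibria equals the best over Nash equilibria
(`PoTS = PoS`). -/
theorem stmt14 {S₁ S₂ : Type*} [Fintype S₁] [Fintype S₂]
    (u₁ u₂ : S₁ → S₂ → ℝ) (sw : S₁ × S₂ → ℝ) (hsw : ∀ p, sw p = u₁ p.1 p.2 + u₂ p.1 p.2)
    (hNE : (nashSet2 u₁ u₂).Nonempty)
    (h : ∀ (x x' : S₁) (y y' : S₂),
      u₁ x y ≤ u₁ x' y → u₂ x y ≤ u₂ x y' →
        (sw (x, y) ≤ sw (x', y) ∨ sw (x, y) ≤ sw (x, y'))) :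
    sSup (sw '' transNE2 u₁ u₂) = sSup (sw '' nashSet2 u₁ u₂) :=
  stmt14_general u₁ u₂ sw h
end

section
/- In any α,β,λ,μ-extensively smooth game with nonnegative utilities, every transition s of the Nash equilibria satisfies sw(s) ≥ (αβλ)/(1 + αβμ) · sw(s*), where s* is a socially optimal profile; hence PoTA ≥ αβλ/(1 + αβμ). -/
/-- The set of (pure) Nash equilibria of the game with utilities `u`. -/
def nashSet {ι : Type*} [DecidableEq ι] {S : ι → Type*}
    (u : ι → (∀ i, S i) → ℝ) : Set (∀ i, S i) :=
  {s | ∀ i, ∀ y : S i, u i (Function.update s i y) ≤ u i s}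

section Deviation

variable {ι : Type*} [DecidableEq ι] {S : ι → Type*} {u : ι → (∀ i, S i) → ℝ} {α β : ℝ}
  {x : ∀ i, S i}

theorem mul_utility_update_le_of_mem_transitionSet (hα : 0 ≤ α)
    (h1 : ∀ i, ∀ s ∈ transitionSet (nashSet u), ∀ d ∈ nashSet u,
      s i = d i → u i s ≥ α * u i d)
    (h2 : ∀ i, ∀ t ∈ transitionSet (nashSet u), ∀ v ∈ transitionSet (nashSet u),
      u i (Function.update t i (x i)) ≥ β * u i (Function.update v i (x i)))
    {s : ∀ i, S i} (hs : s ∈ transitionSet (nashSet u)) (i : ι) :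
    α * β * u i (Function.update s i (x i)) ≤ u i s := by
  obtain ⟨d, hd, hsd⟩ := hs i
  calc α * β * u i (Function.update s i (x i))
      = α * (β * u i (Function.update s i (x i))) := mul_assoc _ _ _
    _ ≤ α * u i (Function.update d i (x i)) :=
        mul_le_mul_of_nonneg_left (h2 i d (subset_transitionSet _ hd) s hs) hα
    _ ≤ α * u i d := mul_le_mul_of_nonneg_left (hd i (x i)) hα
    _ ≤ u i s := h1 i s hs d hd hsd

theorem mul_sum_utility_update_le_of_mem_transitionSet [Fintype ι] (hα : 0 ≤ α)
    (h1 : ∀ i, ∀ s ∈ transitionSet (nashSet u), ∀ d ∈ nashSet u,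
      s i = d i → u i s ≥ α * u i d)
    (h2 : ∀ i, ∀ t ∈ transitionSet (nashSet u), ∀ v ∈ transitionSet (nashSet u),
      u i (Function.update t i (x i)) ≥ β * u i (Function.update v i (x i)))
    {s : ∀ i, S i} (hs : s ∈ transitionSet (nashSet u)) :
    α * β * ∑ i, u i (Function.update s i (x i)) ≤ ∑ i, u i s := by
  rw [Finset.mul_sum]
  exact Finset.sum_le_sum fun i _ => mul_utility_update_le_of_mem_transitionSet hα h1 h2 hs i

end Deviation

theorem div_mul_le_of_le_mul_sub {c lam μ W A O : ℝ} (hc : 0 ≤ c) (hden : 0 < 1 + c * μ)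
    (hW : c * A ≤ W) (hA : A ≥ lam * O - μ * W) :
    c * lam / (1 + c * μ) * O ≤ W := by
  rw [div_mul_eq_mul_div, div_le_iff₀ hden]
  nlinarith [mul_le_mul_of_nonneg_left hA hc]

theorem stmt15_general {ι : Type*} [Fintype ι] [DecidableEq ι] {S : ι → Type*}
    (u : ι → (∀ i, S i) → ℝ)
    (sw : (∀ i, S i) → ℝ) (hsw : ∀ s, sw s = ∑ i, u i s)
    (α β lam μ : ℝ) (hα : 0 < α) (hβ : 0 < β)
    (hden : 0 < 1 + α * β * μ)
    (h1 : ∀ i, ∀ s ∈ transitionSet (nashSet u), ∀ d ∈ nashSet u,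
      s i = d i → u i s ≥ α * u i d)
    (h2 : ∀ sstar : ∀ i, S i, (∀ w, sw w ≤ sw sstar) →
      ∀ i, ∀ t ∈ transitionSet (nashSet u), ∀ v ∈ transitionSet (nashSet u),
        u i (Function.update t i (sstar i)) ≥ β * u i (Function.update v i (sstar i)))
    (h3 : ∀ sstar : ∀ i, S i, (∀ w, sw w ≤ sw sstar) →
      ∀ t ∈ transitionSet (nashSet u),
        ∑ i, u i (Function.update t i (sstar i)) ≥ lam * sw sstar - μ * sw t) :
    ∀ s ∈ transitionSet (nashSet u), ∀ sstar : ∀ i, S i, (∀ w, sw w ≤ sw sstar) →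
      sw s ≥ (α * β * lam) / (1 + α * β * μ) * sw sstar := by
  intro s hs sstar hopt
  have hdev : α * β * ∑ i, u i (Function.update s i (sstar i)) ≤ sw s :=
    hsw s ▸ mul_sum_utility_update_le_of_mem_transitionSet hα.le h1 (h2 sstar hopt) hs
  exact div_mul_le_of_le_mul_sub (by positivity) hden hdev (h3 sstar hopt s hs)

/-- In an `α,β,λ,μ`-extensively smooth game with nonnegative utilities, every
transition `s` of the Nash equilibria satisfies
`sw(s) ≥ (αβλ)/(1 + αβμ)·sw(s*)` for any socially optimal `s*`;
hence `PoTA ≥ αβλ/(1 + αβμ)`. -/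
theorem stmt15 {ι : Type*} [Fintype ι] [DecidableEq ι] {S : ι → Type*}
    (u : ι → (∀ i, S i) → ℝ) (hnn : ∀ i s, 0 ≤ u i s)
    (sw : (∀ i, S i) → ℝ) (hsw : ∀ s, sw s = ∑ i, u i s)
    (α β lam μ : ℝ) (hα : 0 < α) (hβ : 0 < β) (hlam : 0 < lam) (hμ : 0 ≤ μ)
    (hden : 0 < 1 + α * β * μ)
    (hNE : (nashSet u).Nonempty)
    (h1 : ∀ i, ∀ s ∈ transitionSet (nashSet u), ∀ d ∈ nashSet u,
      s i = d i → u i s ≥ α * u i d)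
    (h2 : ∀ sstar : ∀ i, S i, (∀ w, sw w ≤ sw sstar) →
      ∀ i, ∀ t ∈ transitionSet (nashSet u), ∀ v ∈ transitionSet (nashSet u),
        u i (Function.update t i (sstar i)) ≥ β * u i (Function.update v i (sstar i)))
    (h3 : ∀ sstar : ∀ i, S i, (∀ w, sw w ≤ sw sstar) →
      ∀ t ∈ transitionSet (nashSet u),
        ∑ i, u i (Function.update t i (sstar i)) ≥ lam * sw sstar - μ * sw t) :
    ∀ s ∈ transitionSet (nashSet u), ∀ sstar : ∀ i, S i, (∀ w, sw w ≤ sw sstar) →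
      sw s ≥ (α * β * lam) / (1 + α * β * μ) * sw sstar :=
  stmt15_general u sw hsw α β lam μ hα hβ hden h1 h2 h3
end

section
/- In a graph coordination game with colour set {1,2}, in any stable transition every player i has at least ⌊(deg(i) − 1)/2⌋ neighbours of her own colour, and in any Nash equilibrium every player i has at least ⌈deg(i)/2⌉ neighbours of her own colour. -/
/-- Utility of node `i` in the coordination game on graph `G` with colouring `s`:
the number of neighbours of `i` sharing `i`'s colour. -/
noncomputable def coordUtil {V : Type*} (G : SimpleGraph V) (s : V → Fin 2) (i : V) : ℕ :=
  {j | G.Adj i j ∧ s j = s i}.ncard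

/-- `i`'s current colour is a best response in colouring `s`. -/
def isBR {V : Type*} [DecidableEq V] (G : SimpleGraph V) (s : V → Fin 2) (i : V) : Prop :=
  ∀ x : Fin 2, coordUtil G (Function.update s i x) i ≤ coordUtil G s i

/-- `s` is a (pure) Nash equilibrium of the coordination game on `G`. -/
def isNashEq {V : Type*} [DecidableEq V] (G : SimpleGraph V) (s : V → Fin 2) : Prop :=
  ∀ i, isBR G s i

/-- `s` is a stable transition: every non-best-responding player `i` has another
non-best-responding player `j` one of whose best responses renders `i`'s current
colour a best response. (Since monochromatic colourings are equilibria, every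
colouring is a transition of the Nash equilibria.) -/
def isStableTransition {V : Type*} [DecidableEq V] (G : SimpleGraph V)
    (s : V → Fin 2) : Prop :=
  ∀ i, ¬ isBR G s i → ∃ j, j ≠ i ∧ ¬ isBR G s j ∧
    ∃ x : Fin 2,
      (∀ y : Fin 2,
        coordUtil G (Function.update s j y) j ≤ coordUtil G (Function.update s j x) j) ∧
      isBR G (Function.update s j x) i

/-!
A player who is not best-responding has more neighbours of the other colour than of her own.
In a stable transition some single other player can change colour so that she becomes
best-responding; that change moves at most one neighbour into her colour class and at most one
out of the other, so the gap between the two classes is at most two.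
-/

namespace SimpleGraph

variable {V : Type*} (G : SimpleGraph V)

noncomputable def colorNeighborCount (s : V → Fin 2) (i : V) (c : Fin 2) : ℕ :=
  {j | G.Adj i j ∧ s j = c}.ncard

variable {G}

lemma coordUtil_eq_colorNeighborCount (s : V → Fin 2) (i : V) :
    coordUtil G s i = G.colorNeighborCount s i (s i) :=
  rfl

variable (G) in
lemma ncard_neighborSet_le_colorNeighborCount_add (s : V → Fin 2) (i : V) (c : Fin 2) :
    {j | G.Adj i j}.ncard ≤ G.colorNeighborCount s i c + G.colorNeighborCount s i (1 - c) := by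
  have hsplit : {j | G.Adj i j} =
      {j | G.Adj i j ∧ s j = c} ∪ {j | G.Adj i j ∧ s j = 1 - c} := by
    ext j
    have : ∀ x : Fin 2, x = c ∨ x = 1 - c := by revert c; decide
    simp only [Set.mem_ofPred_eq, Set.mem_union, ← and_or_left, this, and_true]
  rw [hsplit]
  exact Set.ncard_union_le _ _

lemma colorNeighborCount_le_add_one {s t : V → Fin 2} {i j : V} (hfin : {k | G.Adj i k}.Finite)
    (hst : ∀ k ≠ j, s k = t k) (c : Fin 2) :
    G.colorNeighborCount s i c ≤ G.colorNeighborCount t i c + 1 := by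
  have hsub : {k | G.Adj i k ∧ s k = c} ⊆ insert j {k | G.Adj i k ∧ t k = c} := by
    rintro k ⟨hik, hk⟩
    by_cases hkj : k = j
    · exact Or.inl hkj
    · exact Or.inr ⟨hik, hst k hkj ▸ hk⟩
  calc G.colorNeighborCount s i c
      ≤ (insert j {k | G.Adj i k ∧ t k = c}).ncard :=
        Set.ncard_le_ncard hsub ((hfin.subset fun _ hk ↦ hk.1).insert j)
    _ ≤ G.colorNeighborCount t i c + 1 := Set.ncard_insert_le _ _

variable [DecidableEq V]

lemma coordUtil_update_self (s : V → Fin 2) (i : V) (x : Fin 2) :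
    coordUtil G (Function.update s i x) i = G.colorNeighborCount s i x := by
  unfold coordUtil colorNeighborCount
  congr 1
  ext j
  by_cases hj : j = i
  · subst hj
    simp
  · simp [Function.update_of_ne hj]

lemma colorNeighborCount_le_of_isBR {s : V → Fin 2} {i : V} (h : isBR G s i) (x : Fin 2) :
    G.colorNeighborCount s i x ≤ coordUtil G s i := by
  simpa only [coordUtil_update_self] using h x

lemma le_coordUtil_of_isBR {s : V → Fin 2} {i : V} (h : isBR G s i) :
    ({j | G.Adj i j}.ncard + 1) / 2 ≤ coordUtil G s i := by
  have hdeg := G.ncard_neighborSet_le_colorNeighborCount_add s i (s i)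
  have hother := colorNeighborCount_le_of_isBR h (1 - s i)
  rw [coordUtil_eq_colorNeighborCount] at hother ⊢
  omega

lemma le_coordUtil_of_isBR_update {s : V → Fin 2} {i j : V} (hji : j ≠ i) {x : Fin 2}
    (h : isBR G (Function.update s j x) i) :
    ({k | G.Adj i k}.ncard - 1) / 2 ≤ coordUtil G s i := by
  by_cases hfin : {k | G.Adj i k}.Finite
  swap
  · simp [Set.Infinite.ncard hfin]
  set t := Function.update s j x
  have hti : t i = s i := Function.update_of_ne hji.symm _ _
  have hagree : ∀ k ≠ j, s k = t k := fun k hk ↦ (Function.update_of_ne hk _ _).symm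
  have hdeg := G.ncard_neighborSet_le_colorNeighborCount_add s i (s i)
  have hother : G.colorNeighborCount s i (1 - s i) ≤ G.colorNeighborCount t i (1 - s i) + 1 :=
    colorNeighborCount_le_add_one hfin hagree _
  have hown : G.colorNeighborCount t i (s i) ≤ G.colorNeighborCount s i (s i) + 1 :=
    colorNeighborCount_le_add_one hfin (fun k hk ↦ (hagree k hk).symm) _
  have hbr : G.colorNeighborCount t i (1 - s i) ≤ G.colorNeighborCount t i (s i) := by
    simpa only [coordUtil_eq_colorNeighborCount, hti] using
      colorNeighborCount_le_of_isBR h (1 - s i)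
  rw [coordUtil_eq_colorNeighborCount]
  omega

end SimpleGraph

theorem stmt16_general {V : Type*} [DecidableEq V] (G : SimpleGraph V)
    (s : V → Fin 2) :
    (isStableTransition G s →
      ∀ i, ({j | G.Adj i j}.ncard - 1) / 2 ≤ coordUtil G s i) ∧
    (isNashEq G s →
      ∀ i, ({j | G.Adj i j}.ncard + 1) / 2 ≤ coordUtil G s i) := by
  refine ⟨fun hst i ↦ ?_, fun hne i ↦ SimpleGraph.le_coordUtil_of_isBR (hne i)⟩
  by_cases hi : isBR G s i
  · exact (Nat.div_le_div_right (by omega)).trans (SimpleGraph.le_coordUtil_of_isBR hi)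
  · obtain ⟨j, hji, -, x, -, hbr⟩ := hst i hi
    exact SimpleGraph.le_coordUtil_of_isBR_update hji hbr

/-- In a two-colour graph coordination game, in a stable transition every player has
at least `⌊(deg(i) − 1)/2⌋` same-coloured neighbours, and in a Nash equilibrium every
player has at least `⌈deg(i)/2⌉` same-coloured neighbours. -/
theorem stmt16 {V : Type*} [Fintype V] [DecidableEq V] (G : SimpleGraph V)
    (s : V → Fin 2) :
    (isStableTransition G s →
      ∀ i, ({j | G.Adj i j}.ncard - 1) / 2 ≤ coordUtil G s i) ∧
    (isNashEq G s →
      ∀ i, ({j | G.Adj i j}.ncard + 1) / 2 ≤ coordUtil G s i) :=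
  stmt16_general G s
end

section
/- In a graph coordination game with two colours, the social welfare of any stable transition is at least |E| − |N|, and the social welfare of any Nash equilibrium is at least |E|; since the maximum social welfare is 2|E|, the price of stable transition anarchy is at least 1/2 − |N|/(2|E|) and the price of anarchy is at least 1/2. -/
noncomputable def colourDegree {V : Type*} (G : SimpleGraph V) (s : V → Fin 2) (i : V)
    (x : Fin 2) : ℕ :=
  {j | G.Adj i j ∧ s j = x}.ncard

section ColourDegree

variable {V : Type*} (G : SimpleGraph V)

theorem coordUtil_eq_colourDegree (s : V → Fin 2) (i : V) :
    coordUtil G s i = colourDegree G s i (s i) := rfl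

theorem coordUtil_update_self [DecidableEq V] (s : V → Fin 2) (i : V) (x : Fin 2) :
    coordUtil G (Function.update s i x) i = colourDegree G s i x := by
  refine congrArg Set.ncard (Set.ext fun j => and_congr_right fun hij => ?_)
  rw [Function.update_self, Function.update_of_ne (G.ne_of_adj hij).symm]

theorem colourDegree_le_update_add_one [DecidableEq V] [Finite V] (s : V → Fin 2)
    (i j : V) (x y : Fin 2) :
    colourDegree G s i y ≤ colourDegree G (Function.update s j x) i y + 1 := by
  have hsub : {k | G.Adj i k ∧ s k = y} ⊆
      {k | G.Adj i k ∧ Function.update s j x k = y} ∪ {j} := by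
    rintro k ⟨hik, hk⟩
    by_cases hkj : k = j
    · exact Or.inr hkj
    · exact Or.inl ⟨hik, by rwa [Function.update_of_ne hkj]⟩
  calc colourDegree G s i y
      ≤ ({k | G.Adj i k ∧ Function.update s j x k = y} ∪ {j}).ncard :=
        Set.ncard_le_ncard hsub (Set.toFinite _)
    _ ≤ colourDegree G (Function.update s j x) i y + 1 := by
        grw [Set.ncard_union_le, Set.ncard_singleton]; rfl

theorem colourDegree_update_le_add_one [DecidableEq V] [Finite V] (s : V → Fin 2)
    (i j : V) (x y : Fin 2) :
    colourDegree G (Function.update s j x) i y ≤ colourDegree G s i y + 1 := by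
  simpa [Function.update_idem, Function.update_eq_self] using
    colourDegree_le_update_add_one G (Function.update s j x) i j (s j) y

theorem colourDegree_add_colourDegree_add_one [Finite V] (s : V → Fin 2) (i : V)
    (x : Fin 2) :
    colourDegree G s i x + colourDegree G s i (x + 1) = (G.neighborSet i).ncard := by
  rw [colourDegree, colourDegree, ← Set.ncard_union_eq ?_ (Set.toFinite _) (Set.toFinite _)]
  · congr 1
    ext j
    simp only [Set.mem_union, Set.mem_ofPred_eq, SimpleGraph.mem_neighborSet, ← and_or_left,
      and_iff_left_iff_imp]
    intro _
    omega
  · rw [Set.disjoint_left]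
    rintro k ⟨-, rfl⟩ ⟨-, h⟩
    omega

end ColourDegree

theorem sum_ncard_neighborSet {V : Type*} [Fintype V] (G : SimpleGraph V) :
    ∑ i, (G.neighborSet i).ncard = 2 * G.edgeSet.ncard := by
  classical
  rw [← SimpleGraph.coe_edgeFinset, Set.ncard_coe_finset, ← G.sum_degrees_eq_twice_card_edges]
  refine Finset.sum_congr rfl fun i _ => ?_
  rw [← SimpleGraph.card_neighborFinset_eq_degree, ← Set.ncard_coe_finset,
    SimpleGraph.coe_neighborFinset]

section Equilibria

variable {V : Type*} [DecidableEq V] {G : SimpleGraph V} {s : V → Fin 2}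

theorem isBR.colourDegree_le {i : V} (h : isBR G s i) (y : Fin 2) :
    colourDegree G s i y ≤ coordUtil G s i :=
  coordUtil_update_self G s i y ▸ h y

theorem isStableTransition.colourDegree_le [Finite V] (h : isStableTransition G s) (i : V)
    (y : Fin 2) : colourDegree G s i y ≤ coordUtil G s i + 2 := by
  by_cases hBR : isBR G s i
  · exact (hBR.colourDegree_le y).trans (Nat.le_add_right _ _)
  obtain ⟨j, hji, -, x, -, hBR_after⟩ := h i hBR
  have hsame : coordUtil G (Function.update s j x) i =
      colourDegree G (Function.update s j x) i (s i) := by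
    rw [coordUtil_eq_colourDegree, Function.update_of_ne hji.symm]
  have := hBR_after.colourDegree_le y
  have := colourDegree_le_update_add_one G s i j x y
  have := colourDegree_update_le_add_one G s i j x (s i)
  rw [coordUtil_eq_colourDegree]
  omega

end Equilibria

theorem ncard_edgeSet_le_sum_coordUtil_add {V : Type*} [Fintype V] (G : SimpleGraph V)
    (s : V → Fin 2) (c : ℕ) (h : ∀ i, colourDegree G s i (s i + 1) ≤ coordUtil G s i + 2 * c) :
    G.edgeSet.ncard ≤ ∑ i, coordUtil G s i + Fintype.card V * c := by
  suffices 2 * G.edgeSet.ncard ≤ 2 * (∑ i, coordUtil G s i + Fintype.card V * c) by omega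
  calc 2 * G.edgeSet.ncard = ∑ i, (G.neighborSet i).ncard := (sum_ncard_neighborSet G).symm
    _ ≤ ∑ i, (2 * coordUtil G s i + 2 * c) := Finset.sum_le_sum fun i _ => by
        rw [← colourDegree_add_colourDegree_add_one G s i (s i), ← coordUtil_eq_colourDegree]
        linarith [h i]
    _ = 2 * (∑ i, coordUtil G s i + Fintype.card V * c) := by
        rw [Finset.sum_add_distrib, ← Finset.mul_sum, Finset.sum_const, smul_eq_mul,
          Finset.card_univ]
        ring

theorem half_sub_div_le_div {m a w : ℝ} (hm : 0 < m) (h : m - a ≤ w) :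
    1 / 2 - a / (2 * m) ≤ w / (2 * m) := by
  rw [div_sub_div _ _ two_ne_zero (by positivity), div_le_div_iff₀ (by positivity) (by positivity)]
  nlinarith

/-- In a two-colour graph coordination game: the social welfare of a stable transition
is at least `|E| − |N|` and that of a Nash equilibrium is at least `|E|`; since the
maximum social welfare is `2|E|`, the price of stable transition anarchy is at least
`1/2 − |N|/(2|E|)` and the price of anarchy is at least `1/2`. -/
theorem stmt17 {V : Type*} [Fintype V] [DecidableEq V] (G : SimpleGraph V)
    (s : V → Fin 2) :
    (isStableTransition G s →
      (G.edgeSet.ncard : ℤ) - Fintype.card V ≤ (∑ i, coordUtil G s i : ℤ)) ∧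
    (isNashEq G s →
      (G.edgeSet.ncard : ℤ) ≤ (∑ i, coordUtil G s i : ℤ)) ∧
    (0 < G.edgeSet.ncard →
      (isStableTransition G s →
        1 / 2 - (Fintype.card V : ℝ) / (2 * G.edgeSet.ncard) ≤
          (∑ i, coordUtil G s i : ℝ) / (2 * G.edgeSet.ncard)) ∧
      (isNashEq G s →
        (1 : ℝ) / 2 ≤ (∑ i, coordUtil G s i : ℝ) / (2 * G.edgeSet.ncard))) := by
  have hstable : isStableTransition G s →
      (G.edgeSet.ncard : ℤ) - Fintype.card V ≤ ∑ i, (coordUtil G s i : ℤ) := fun h => by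
    have := ncard_edgeSet_le_sum_coordUtil_add G s 1 fun i => h.colourDegree_le i _
    rw [← Nat.cast_sum]
    omega
  have hnash : isNashEq G s → (G.edgeSet.ncard : ℤ) ≤ ∑ i, (coordUtil G s i : ℤ) := fun h => by
    have := ncard_edgeSet_le_sum_coordUtil_add G s 0 fun i => (h i).colourDegree_le _
    rw [← Nat.cast_sum]
    omega
  refine ⟨hstable, hnash, fun hE => ⟨fun h => ?_, fun h => ?_⟩⟩
  · exact half_sub_div_le_div (by positivity) (by exact_mod_cast hstable h)
  · simpa using half_sub_div_le_div (a := 0) (by positivity)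
      (by rw [sub_zero]; exact_mod_cast hnash h)
end

section
/- For the two-colour coordination game on a complete graph Kₙ (n ≥ 2), there exists a stable transition that is not a Nash equilibrium if and only if n is even. -/
/-!
On `Kₙ` a node's utility is the number of *other* nodes of its colour, so a node is best
responding iff its colour class is strictly larger than the other one. If `n` is odd the two
classes never tie, so a node `i` that is not best responding lies in the strict minority; a
second non-best-responding node `j` must then lie in the same minority, and its only
improving move shrinks `i`'s class further, so it cannot make `i` best respond. If `n = 2m`,
the colouring with two classes of size `m` has no best-responding node, and any node of the
other class switching to `i`'s colour makes `i` best respond.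
-/

open Finset Function

section CompleteGraph

variable {V : Type*} [Fintype V]

def colourCount (s : V → Fin 2) (x : Fin 2) : ℕ := #{j | s j = x}

def IsBalanced (s : V → Fin 2) : Prop := ∀ x y, colourCount s x = colourCount s y

lemma fin_two_eq_or_eq_of_ne {x y : Fin 2} (h : x ≠ y) (z : Fin 2) : z = x ∨ z = y := by
  omega

lemma colourCount_pos (s : V → Fin 2) (i : V) : 0 < colourCount s (s i) :=
  card_pos.2 ⟨i, by simp⟩

lemma colourCount_add_colourCount (s : V → Fin 2) {x y : Fin 2} (h : x ≠ y) :
    colourCount s x + colourCount s y = Fintype.card V := by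
  have hy : univ.filter (fun j => s j = y) = univ.filter (fun j => ¬ s j = x) :=
    filter_congr fun j _ => by have := fin_two_eq_or_eq_of_ne h (s j); aesop
  rw [colourCount, colourCount, hy, card_filter_add_card_filter_not, card_univ]

variable [DecidableEq V]

lemma colourCount_update_new (s : V → Fin 2) {j : V} {x : Fin 2} (h : s j ≠ x) :
    colourCount (update s j x) x = colourCount s x + 1 := by
  have : univ.filter (fun k => update s j x k = x) = insert j (univ.filter (s · = x)) := by
    ext k
    by_cases hk : k = j
    · subst hk; simp
    · simp [hk]
  rw [colourCount, this, card_insert_of_notMem (by simp [h]), colourCount]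

lemma colourCount_update_old (s : V → Fin 2) {j : V} {x : Fin 2} (h : s j ≠ x) :
    colourCount (update s j x) (s j) + 1 = colourCount s (s j) := by
  have : univ.filter (fun k => update s j x k = s j) = (univ.filter (s · = s j)).erase j := by
    ext k
    by_cases hk : k = j
    · subst hk; simp [Ne.symm h]
    · simp [hk]
  rw [colourCount, this, card_erase_add_one (by simp), colourCount]

lemma coordUtil_top (s : V → Fin 2) (i : V) :
    coordUtil ⊤ s i = colourCount s (s i) - 1 := by
  have : {j | (⊤ : SimpleGraph V).Adj i j ∧ s j = s i} =
      ↑((univ.filter (s · = s i)).erase i) := by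
    ext j
    simp [and_comm, eq_comm]
  rw [coordUtil, this, Set.ncard_coe_finset, card_erase_of_mem (by simp), colourCount]

lemma coordUtil_top_update (s : V → Fin 2) {i : V} {x : Fin 2} (h : s i ≠ x) :
    coordUtil ⊤ (update s i x) i = colourCount s x := by
  rw [coordUtil_top, update_self, colourCount_update_new s h, Nat.add_sub_cancel]

lemma isBR_top_iff_colourCount_lt (s : V → Fin 2) (i : V) {x : Fin 2} (hx : x ≠ s i) :
    isBR ⊤ s i ↔ colourCount s x < colourCount s (s i) := by
  have hpos := colourCount_pos s i
  refine ⟨fun h => ?_, fun h y => ?_⟩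
  · have := h x
    rw [coordUtil_top_update s hx.symm, coordUtil_top] at this
    omega
  · rcases fin_two_eq_or_eq_of_ne hx y with rfl | rfl
    · rw [coordUtil_top_update s hx.symm, coordUtil_top]
      omega
    · rw [update_eq_self]

lemma colourCount_lt_of_not_isBR (hV : Odd (Fintype.card V)) {s : V → Fin 2} {i : V}
    (hi : ¬ isBR ⊤ s i) {x : Fin 2} (hx : x ≠ s i) :
    colourCount s (s i) < colourCount s x := by
  rw [isBR_top_iff_colourCount_lt s i hx, not_lt] at hi
  have hsum := colourCount_add_colourCount s hx
  rcases hi.lt_or_eq with hlt | heq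
  · exact hlt
  · exact absurd ⟨colourCount s x, by omega⟩ (Nat.not_even_iff_odd.2 hV)

theorem isNashEq_top_of_isStableTransition (hV : Odd (Fintype.card V)) {s : V → Fin 2}
    (hs : isStableTransition ⊤ s) : isNashEq ⊤ s := by
  intro i
  by_contra hi
  obtain ⟨j, hji, hj, x, -, hi'⟩ := hs i hi
  have hsj : s j = s i := by
    by_contra h
    have := colourCount_lt_of_not_isBR hV hi h
    have := colourCount_lt_of_not_isBR hV hj (Ne.symm h)
    omega
  have hx : x ≠ s i := by
    rintro rfl
    rw [← hsj, update_eq_self] at hi'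
    exact hi hi'
  have hlt := colourCount_lt_of_not_isBR hV hi hx
  have hxi : x ≠ update s j x i := by rwa [update_of_ne hji.symm]
  rw [isBR_top_iff_colourCount_lt _ i hxi, update_of_ne hji.symm] at hi'
  have hjx : s j ≠ x := hsj ▸ hx.symm
  have hnew := colourCount_update_new s hjx
  have hold := colourCount_update_old s hjx
  rw [hsj] at hold
  omega

lemma IsBalanced.not_isBR_top {s : V → Fin 2} (hbal : IsBalanced s) (i : V) :
    ¬ isBR ⊤ s i := by
  rw [isBR_top_iff_colourCount_lt s i (x := s i + 1) (by omega), hbal (s i + 1) (s i)]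
  exact lt_irrefl _

lemma IsBalanced.isStableTransition_top {s : V → Fin 2} (hbal : IsBalanced s) :
    isStableTransition ⊤ s := by
  intro i _
  obtain ⟨j, hj⟩ : ∃ j, s j = s i + 1 := by
    have := colourCount_pos s i
    rw [hbal (s i) (s i + 1), colourCount, card_pos] at this
    obtain ⟨j, hj⟩ := this
    exact ⟨j, by simpa using hj⟩
  have hji : s j ≠ s i := by rw [hj]; omega
  refine ⟨j, fun h => hji (congrArg s h), hbal.not_isBR_top j, s i, fun y => ?_, ?_⟩
  · rw [coordUtil_top_update s hji]
    by_cases hy : s j = y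
    · rw [← hy, update_eq_self, coordUtil_top, hbal (s j) (s i)]
      omega
    · rw [coordUtil_top_update s hy, hbal]
  · have hij : i ≠ j := fun h => hji (congrArg s h.symm)
    rw [isBR_top_iff_colourCount_lt _ i (x := s j) (by rwa [update_of_ne hij]), update_of_ne hij,
      colourCount_update_new s hji]
    have hold := colourCount_update_old s hji
    rw [hbal (s j) (s i)] at hold
    omega

lemma exists_isBalanced (hV : Even (Fintype.card V)) :
    ∃ s : V → Fin 2, IsBalanced s := by
  obtain ⟨m, hm⟩ := hV
  obtain ⟨t, -, ht⟩ := exists_subset_card_eq (s := (univ : Finset V)) (n := m)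
    (by rw [card_univ]; omega)
  set s : V → Fin 2 := fun j => if j ∈ t then 0 else 1
  have h0 : colourCount s 0 = m := by
    rw [← ht, colourCount]
    congr 1
    ext j
    by_cases hj : j ∈ t <;> simp [s, hj]
  have hsum := colourCount_add_colourCount s (x := 0) (y := 1) (by decide)
  refine ⟨s, fun x y => ?_⟩
  fin_cases x <;> fin_cases y <;> simp <;> omega

end CompleteGraph

/-- For the two-colour coordination game on the complete graph `Kₙ` (`n ≥ 2`), a
stable transition that is not a Nash equilibrium exists iff `n` is even. -/
theorem stmt18 (n : ℕ) (hn : 2 ≤ n) :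
    (∃ s : Fin n → Fin 2,
      isStableTransition (⊤ : SimpleGraph (Fin n)) s ∧
        ¬ isNashEq (⊤ : SimpleGraph (Fin n)) s) ↔ Even n := by
  constructor
  · rintro ⟨s, hs, hnash⟩
    by_contra hodd
    exact hnash (isNashEq_top_of_isStableTransition
      (by rwa [Fintype.card_fin, ← Nat.not_even_iff_odd]) hs)
  · intro heven
    obtain ⟨s, hbal⟩ := exists_isBalanced (V := Fin n) (by rwa [Fintype.card_fin])
    exact ⟨s, hbal.isStableTransition_top, fun h => hbal.not_isBR_top ⟨0, by omega⟩ (h _)⟩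
end

section
/- In the two-colour coordination game on a cycle of length n ≥ 4, the alternating colouring (colours 1 and 2 alternating around the cycle, with one same-coloured adjacent pair when n is odd) is a stable transition that is not a Nash equilibrium; for even n its social welfare is 0 = |E| − |N|, attaining the lower bound for stable transitions. -/
/-- The cycle graph on `ZMod n`: `i` and `j` are adjacent iff they differ by `1`. -/
def cycleGraph (n : ℕ) : SimpleGraph (ZMod n) where
  Adj i j := i ≠ j ∧ (i + 1 = j ∨ j + 1 = i)
  symm := by
    constructor
    intro i j h
    exact ⟨h.1.symm, h.2.symm⟩
  loopless := by
    constructor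
    intro i h
    exact h.1 rfl

/-
On a cycle a node's best response is to agree with a neighbour, so it is best-responding exactly
when it already agrees with one. A node `j` disagreeing with both neighbours sees two equal
neighbours; recolouring `j` to their colour is its best response and turns both neighbours into
best responders. Hence a colouring of the cycle is a stable transition as soon as every
non-best-responding node has a non-best-responding neighbour. In the alternating colouring the
only nodes agreeing with a neighbour are, for odd `n`, the endpoints `-1, 0` of the single
monochromatic edge, so the non-best-responding nodes form the arc `1, …, n - 2`, which has at
least two nodes when `n ≥ 4`; for even `n` no node agrees with a neighbour and the welfare is `0`.
-/

lemma Set.ncard_setOf_eq_or_eq_and {α : Type*} {a b : α} (hab : a ≠ b) (p : α → Prop)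
    [DecidablePred p] :
    {j | (j = a ∨ j = b) ∧ p j}.ncard = (if p a then 1 else 0) + (if p b then 1 else 0) := by
  classical
  have h : {j | (j = a ∨ j = b) ∧ p j} = ↑(({a, b} : Finset α).filter p) := by ext; simp
  rw [h, Set.ncard_coe_finset, Finset.card_filter, Finset.sum_pair hab]

lemma ZMod.natCast_ne_zero_of_pos_of_lt {n a : ℕ} (h0 : 0 < a) (h : a < n) :
    (a : ZMod n) ≠ 0 := by
  rw [Ne, ZMod.natCast_eq_zero_iff]
  exact fun hd => (Nat.le_of_dvd h0 hd).not_gt h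

section Cycle

variable {n : ℕ}

lemma cycleGraph_adj_iff (hn : 2 ≤ n) {i j : ZMod n} :
    (cycleGraph n).Adj i j ↔ j = i - 1 ∨ j = i + 1 := by
  have h1 : (1 : ZMod n) ≠ 0 := by
    simpa using ZMod.natCast_ne_zero_of_pos_of_lt (n := n) (a := 1) one_pos hn
  show i ≠ j ∧ (i + 1 = j ∨ j + 1 = i) ↔ _
  constructor
  · rintro ⟨-, h | h⟩
    · exact Or.inr h.symm
    · exact Or.inl (eq_sub_of_add_eq h)
  · rintro (rfl | rfl)
    · exact ⟨fun h => h1 (by linear_combination h), Or.inr (sub_add_cancel i 1)⟩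
    · exact ⟨fun h => h1 (by linear_combination -h), Or.inl rfl⟩

lemma cycleGraph_edgeSet_ncard [NeZero n] (hn : 3 ≤ n) : (cycleGraph n).edgeSet.ncard = n := by
  have h2 : (2 : ZMod n) ≠ 0 := by
    simpa using ZMod.natCast_ne_zero_of_pos_of_lt (n := n) (a := 2) two_pos hn
  have hrange : (cycleGraph n).edgeSet = Set.range fun i : ZMod n => s(i, i + 1) := by
    ext e
    induction e using Sym2.ind with
    | _ a b =>
      rw [SimpleGraph.mem_edgeSet, cycleGraph_adj_iff (by omega)]
      constructor
      · rintro (rfl | rfl)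
        · exact ⟨a - 1, by dsimp only; rw [sub_add_cancel, Sym2.eq_swap]⟩
        · exact ⟨a, rfl⟩
      · rintro ⟨c, hc⟩
        rcases Sym2.eq_iff.mp hc with ⟨rfl, rfl⟩ | ⟨rfl, rfl⟩
        · exact Or.inr rfl
        · exact Or.inl (add_sub_cancel_right c 1).symm
  have hinj : Function.Injective fun i : ZMod n => s(i, i + 1) := by
    intro a b h
    rcases Sym2.eq_iff.mp h with ⟨h, -⟩ | ⟨h₁, h₂⟩
    · exact h
    · exact absurd (by linear_combination h₂ - h₁) h2
  rw [hrange, ← Set.image_univ, Set.ncard_image_of_injective _ hinj, Set.ncard_univ,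
    Nat.card_zmod]

def cyclePayoff (s : ZMod n → Fin 2) (i : ZMod n) (x : Fin 2) : ℕ :=
  (if s (i - 1) = x then 1 else 0) + (if s (i + 1) = x then 1 else 0)

lemma coordUtil_cycleGraph (hn : 3 ≤ n) (s : ZMod n → Fin 2) (i : ZMod n) :
    coordUtil (cycleGraph n) s i = cyclePayoff s i (s i) := by
  have h2 : (2 : ZMod n) ≠ 0 := by
    simpa using ZMod.natCast_ne_zero_of_pos_of_lt (n := n) (a := 2) two_pos hn
  have hne : i - 1 ≠ i + 1 := fun h => h2 (by linear_combination -h)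
  simp only [coordUtil, cycleGraph_adj_iff (by omega : 2 ≤ n)]
  exact Set.ncard_setOf_eq_or_eq_and hne (fun j => s j = s i)

lemma coordUtil_update_cycleGraph (hn : 3 ≤ n) (s : ZMod n → Fin 2) (i : ZMod n) (x : Fin 2) :
    coordUtil (cycleGraph n) (Function.update s i x) i = cyclePayoff s i x := by
  have hm : i - 1 ≠ i := ((cycleGraph_adj_iff (by omega)).mpr (Or.inl rfl)).ne'
  have hp : i + 1 ≠ i := ((cycleGraph_adj_iff (by omega)).mpr (Or.inr rfl)).ne'
  rw [coordUtil_cycleGraph hn, cyclePayoff, cyclePayoff, Function.update_of_ne hm,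
    Function.update_of_ne hp, Function.update_self]

lemma isBR_cycleGraph_iff (hn : 3 ≤ n) (s : ZMod n → Fin 2) (i : ZMod n) :
    isBR (cycleGraph n) s i ↔ s (i - 1) = s i ∨ s (i + 1) = s i := by
  simp only [isBR, coordUtil_update_cycleGraph hn, coordUtil_cycleGraph hn, cyclePayoff]
  generalize s (i - 1) = a, s (i + 1) = b, s i = c
  revert a b c
  decide

lemma exists_bestResponse_isBR_of_adj (hn : 3 ≤ n) {s : ZMod n → Fin 2} {i j : ZMod n}
    (hij : (cycleGraph n).Adj i j) (hj : ¬ isBR (cycleGraph n) s j) :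
    ∃ x : Fin 2,
      (∀ y : Fin 2, coordUtil (cycleGraph n) (Function.update s j y) j ≤
        coordUtil (cycleGraph n) (Function.update s j x) j) ∧
      isBR (cycleGraph n) (Function.update s j x) i := by
  rw [isBR_cycleGraph_iff hn, not_or] at hj
  have heq : s (j - 1) = s (j + 1) := by
    generalize s (j - 1) = a, s (j + 1) = b, s j = c at hj
    revert a b c
    decide
  refine ⟨s (j - 1), fun y => ?_, ?_⟩
  · simp only [coordUtil_update_cycleGraph hn, cyclePayoff, ← heq]
    split_ifs <;> omega
  · rw [isBR_cycleGraph_iff hn, Function.update_of_ne hij.ne]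
    rcases (cycleGraph_adj_iff (by omega)).mp hij with rfl | rfl
    · left
      rw [Function.update_self, heq, sub_add_cancel]
    · right
      rw [Function.update_self, add_sub_cancel_right]

lemma isStableTransition_cycleGraph (hn : 3 ≤ n) {s : ZMod n → Fin 2}
    (h : ∀ i, ¬ isBR (cycleGraph n) s i →
      ∃ j, (cycleGraph n).Adj i j ∧ ¬ isBR (cycleGraph n) s j) :
    isStableTransition (cycleGraph n) s := by
  intro i hi
  obtain ⟨j, hij, hj⟩ := h i hi
  exact ⟨j, hij.ne', hj, exists_bestResponse_isBR_of_adj hn hij hj⟩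

end Cycle

section Alternating

variable {n : ℕ} [NeZero n]

def alternating (n : ℕ) : ZMod n → Fin 2 := fun i => if i.val % 2 = 0 then 0 else 1

lemma alternating_add_one_eq_iff (k : ZMod n) :
    alternating n (k + 1) = alternating n k ↔ Odd n ∧ k = -1 := by
  obtain ⟨m, hm, rfl⟩ : ∃ m < n, (m : ZMod n) = k := ⟨k.val, k.val_lt, k.natCast_zmod_val⟩
  have hneg : (m : ZMod n) = -1 ↔ m + 1 = n := by
    rw [eq_neg_iff_add_eq_zero, ← Nat.cast_add_one, ZMod.natCast_eq_zero_iff]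
    exact ⟨fun hd => ((Nat.le_of_dvd m.succ_pos hd).antisymm hm).symm, fun h => h ▸ dvd_rfl⟩
  simp only [← Nat.cast_add_one, alternating, ZMod.val_natCast]
  rw [hneg, Nat.odd_iff, Nat.mod_eq_of_lt hm]
  rcases Nat.lt_or_eq_of_le (show m + 1 ≤ n from hm) with hlt | heq
  · rw [Nat.mod_eq_of_lt hlt]
    split_ifs <;> simp <;> omega
  · rw [heq, Nat.mod_self]
    split_ifs <;> simp <;> omega

lemma alternating_sub_one_eq_iff (k : ZMod n) :
    alternating n (k - 1) = alternating n k ↔ Odd n ∧ k = 0 := by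
  have h := alternating_add_one_eq_iff (k - 1)
  rwa [sub_add_cancel, sub_eq_neg_self, eq_comm] at h

lemma isBR_alternating_iff (hn : 3 ≤ n) (i : ZMod n) :
    isBR (cycleGraph n) (alternating n) i ↔ Odd n ∧ (i = 0 ∨ i = -1) := by
  rw [isBR_cycleGraph_iff hn, alternating_sub_one_eq_iff, alternating_add_one_eq_iff, and_or_left]

lemma coordUtil_alternating_of_even (hn : 3 ≤ n) (he : Even n) (i : ZMod n) :
    coordUtil (cycleGraph n) (alternating n) i = 0 := by
  have hodd : ¬ Odd n := Nat.not_odd_iff_even.mpr he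
  rw [coordUtil_cycleGraph hn, cyclePayoff, if_neg, if_neg]
  · exact fun h => hodd ((alternating_add_one_eq_iff i).mp h).1
  · exact fun h => hodd ((alternating_sub_one_eq_iff i).mp h).1

lemma exists_adj_not_isBR_alternating (hn : 4 ≤ n) {i : ZMod n}
    (hi : ¬ isBR (cycleGraph n) (alternating n) i) :
    ∃ j, (cycleGraph n).Adj i j ∧ ¬ isBR (cycleGraph n) (alternating n) j := by
  have h3 : (3 : ZMod n) ≠ 0 := by
    simpa using ZMod.natCast_ne_zero_of_pos_of_lt (n := n) (a := 3) three_pos hn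
  simp only [isBR_alternating_iff (by omega : 3 ≤ n)] at hi ⊢
  by_cases hlast : i + 1 = -1
  · refine ⟨i - 1, (cycleGraph_adj_iff (by omega)).mpr (Or.inl rfl), ?_⟩
    rintro ⟨hodd, h | h⟩
    · exact h3 (by linear_combination hlast - h)
    · exact hi ⟨hodd, Or.inl (by linear_combination h)⟩
  · refine ⟨i + 1, (cycleGraph_adj_iff (by omega)).mpr (Or.inr rfl), ?_⟩
    rintro ⟨hodd, h | h⟩
    · exact hi ⟨hodd, Or.inr (by linear_combination h)⟩
    · exact hlast h

end Alternating

/-- On the cycle of length `n ≥ 4`, the alternating two-colouring is a stable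
transition that is not a Nash equilibrium; for even `n` its social welfare is `0`,
attaining the lower bound `|E| − |N| = n − n = 0` for stable transitions. -/
theorem stmt19 (n : ℕ) [NeZero n] (hn : 4 ≤ n) :
    isStableTransition (cycleGraph n) (fun i => if i.val % 2 = 0 then 0 else 1) ∧
    ¬ isNashEq (cycleGraph n) (fun i => if i.val % 2 = 0 then 0 else 1) ∧
    (cycleGraph n).edgeSet.ncard = n ∧
    (Even n →
      ∑ i : ZMod n,
        coordUtil (cycleGraph n) (fun i => if i.val % 2 = 0 then 0 else 1) i = 0) := by
  have hn3 : 3 ≤ n := by omega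
  have h2 : (2 : ZMod n) ≠ 0 := by
    simpa using ZMod.natCast_ne_zero_of_pos_of_lt (n := n) (a := 2) two_pos hn3
  refine ⟨?_, ?_, cycleGraph_edgeSet_ncard hn3, ?_⟩
  · exact isStableTransition_cycleGraph hn3 fun i => exists_adj_not_isBR_alternating hn
  · intro hNash
    obtain ⟨-, h | h⟩ := (isBR_alternating_iff hn3 1).mp (hNash 1)
    · exact h2 (by linear_combination 2 * h)
    · exact h2 (by linear_combination h)
  · intro he
    exact Finset.sum_eq_zero fun i _ => coordUtil_alternating_of_even hn3 he i
end
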